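/- Let Φ be an irreducible crystallographic root system of rank 2 (i.e. of type A_2, B_2 or G_2), k a positive integer, and α, β ∈ Φ⁺ distinct with {α, β} ≠ Δ. Then there exists γ ∈ Φ⁺ such that H_α^k ∩ H_β^k ⊆ H_γ^0, and there exists γ' ∈ Φ⁺ such that H_α^{−k} ∩ H_β^{−k} ⊆ H_{γ'}^0. -/

import Mathlib

open scoped Classical
open MvPolynomial

noncomputable section

/-- The standard inner (dot) product on Euclidean space `Fin m → ℝ`. -/
def dot {m : ℕ} (x y : Fin m → ℝ) : ℝ := ∑ i, x i * y i

/-- The (central) hyperplane with normal vector `c`. -/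
def Hset {m : ℕ} (c : Fin m → ℝ) : Set (Fin m → ℝ) := {v | dot c v = 0}

/-- `Φ` is an irreducible crystallographic (reduced) root system of rank `ℓ` in `ℝ^ℓ`. -/
structure IsIrredCrystRootSystem {ℓ : ℕ} (Φ : Finset (Fin ℓ → ℝ)) : Prop where
  nonzero : ∀ α ∈ Φ, α ≠ 0
  span_top : Submodule.span ℝ (Φ : Set (Fin ℓ → ℝ)) = ⊤
  reflect_mem : ∀ α ∈ Φ, ∀ β ∈ Φ, β - (2 * dot β α / dot α α) • α ∈ Φ
  crystallographic : ∀ α ∈ Φ, ∀ β ∈ Φ, ∃ n : ℤ, 2 * dot β α / dot α α = (n : ℝ)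
  reduced : ∀ α ∈ Φ, ∀ t : ℝ, t • α ∈ Φ → t = 1 ∨ t = -1
  irreducible : ∀ Ψ : Finset (Fin ℓ → ℝ), Ψ ⊆ Φ →
    (∀ α ∈ Ψ, ∀ β ∈ Φ \ Ψ, dot α β = 0) → Ψ = ∅ ∨ Ψ = Φ

/-- `Δ` (indexed by `Fin ℓ`) is a simple system of the root system `Φ`. -/
structure IsSimpleSystem {ℓ : ℕ} (Φ : Finset (Fin ℓ → ℝ)) (Δ : Fin ℓ → Fin ℓ → ℝ) : Prop where
  mem : ∀ i, Δ i ∈ Φ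
  indep : LinearIndependent ℝ Δ
  decomp : ∀ α ∈ Φ, (∃ c : Fin ℓ → ℕ, α = ∑ i, (c i : ℝ) • Δ i) ∨
      (∃ c : Fin ℓ → ℕ, -α = ∑ i, (c i : ℝ) • Δ i)

/-- The positive system `Φ⁺` corresponding to the simple system `Δ`. -/
def posRoots {ℓ : ℕ} (Φ : Finset (Fin ℓ → ℝ)) (Δ : Fin ℓ → Fin ℓ → ℝ) :
    Finset (Fin ℓ → ℝ) :=
  Φ.filter fun α => ∃ c : Fin ℓ → ℕ, α = ∑ i, (c i : ℝ) • Δ i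

/-- `I` is an ideal of the positive system `Φ⁺`: it is closed under going down,
i.e. if `α ∈ I`, `β ∈ Φ⁺` and `α - β` is a nonnegative integer combination of
simple roots, then `β ∈ I`. -/
def IsIdeal {ℓ : ℕ} (Φ : Finset (Fin ℓ → ℝ)) (Δ : Fin ℓ → Fin ℓ → ℝ)
    (I : Finset (Fin ℓ → ℝ)) : Prop :=
  I ⊆ posRoots Φ Δ ∧
  ∀ α ∈ I, ∀ β ∈ posRoots Φ Δ,
    (∃ c : Fin ℓ → ℕ, α - β = ∑ i, (c i : ℝ) • Δ i) → β ∈ I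

/-- `ht` is the height function on `Φ⁺`: `ht (∑ cᵢ αᵢ) = ∑ cᵢ`. -/
def IsHeight {ℓ : ℕ} (Φ : Finset (Fin ℓ → ℝ)) (Δ : Fin ℓ → Fin ℓ → ℝ)
    (ht : (Fin ℓ → ℝ) → ℕ) : Prop :=
  ∀ α ∈ posRoots Φ Δ, ∀ c : Fin ℓ → ℕ, α = ∑ i, (c i : ℝ) • Δ i → ht α = ∑ i, c i

/-- `h` is the Coxeter number of `Φ`: `h = ht θ + 1` where `θ` is the highest root. -/
def IsCoxeterNumber {ℓ : ℕ} (Φ : Finset (Fin ℓ → ℝ)) (Δ : Fin ℓ → Fin ℓ → ℝ)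
    (ht : (Fin ℓ → ℝ) → ℕ) (h : ℕ) : Prop :=
  ∃ θ ∈ posRoots Φ Δ,
    (∀ α ∈ posRoots Φ Δ, ∃ c : Fin ℓ → ℕ, θ - α = ∑ i, (c i : ℝ) • Δ i) ∧ h = ht θ + 1

/-- The embedding `ℝ^ℓ → V = ℝ^{ℓ+1}` (as the first `ℓ` coordinates). -/
def emb {ℓ : ℕ} (x : Fin ℓ → ℝ) : Fin (ℓ + 1) → ℝ := Fin.snoc x 0

/-- The unit vector `z` in `V = ℝ^{ℓ+1}` orthogonal to `ℝ^ℓ`. -/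
def zvec {ℓ : ℕ} : Fin (ℓ + 1) → ℝ := Fin.snoc 0 1

/-- `wht` is the extended height function `w̃ht`:
`w̃ht (α - jz) = -ht α + jh + 1` for `j > 0`, `w̃ht (α - jz) = ht α - jh` for `j ≤ 0`,
and `w̃ht z = 1`. -/
def IsExtHeight {ℓ : ℕ} (Φ : Finset (Fin ℓ → ℝ)) (Δ : Fin ℓ → Fin ℓ → ℝ)
    (ht : (Fin ℓ → ℝ) → ℕ) (h : ℕ) (wht : (Fin (ℓ + 1) → ℝ) → ℤ) : Prop :=
  (∀ α ∈ posRoots Φ Δ, ∀ j : ℤ, 0 < j →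
      wht (emb α - j • zvec) = -(ht α : ℤ) + j * (h : ℤ) + 1) ∧
  (∀ α ∈ posRoots Φ Δ, ∀ j : ℤ, j ≤ 0 →
      wht (emb α - j • zvec) = (ht α : ℤ) - j * (h : ℤ)) ∧
  wht zvec = 1

/-!  Arrangements are recorded by finite sets of normal vectors: the normal
`emb α - j • zvec` corresponds to the hyperplane `H_α^j = {v | (α,v) - j(z,v) = 0}`,
and `zvec` corresponds to `H_z`.  In all the arrangements considered below distinct
normals define distinct hyperplanes. -/

/-- The cone of the `k`-th extended Shi arrangement :
`{H_α^j : α ∈ Φ⁺, -k+1 ≤ j ≤ k} ∪ {H_z}`. -/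
def ShiBase {ℓ : ℕ} (k : ℕ) (P : Finset (Fin ℓ → ℝ)) : Finset (Fin (ℓ + 1) → ℝ) :=
  ((P ×ˢ Finset.Icc (-(k : ℤ) + 1) (k : ℤ)).image fun p => emb p.1 - p.2 • zvec) ∪ {zvec}

/-- `Shi^k_{+T} = {H_α^j : α ∈ Φ⁺, -k+1 ≤ j ≤ k} ∪ {H_z} ∪ {H_α^{-k} : α ∈ T}`. -/
def ShiPlus {ℓ : ℕ} (k : ℕ) (P T : Finset (Fin ℓ → ℝ)) : Finset (Fin (ℓ + 1) → ℝ) :=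
  ShiBase k P ∪ T.image fun α => emb α + (k : ℤ) • zvec

/-- `Shi^k_{-T} = ({H_α^j : α ∈ Φ⁺, -k+1 ≤ j ≤ k} ∪ {H_z}) \ {H_α^k : α ∈ T}`. -/
def ShiMinus {ℓ : ℕ} (k : ℕ) (P T : Finset (Fin ℓ → ℝ)) : Finset (Fin (ℓ + 1) → ℝ) :=
  ShiBase k P \ T.image fun α => emb α - (k : ℤ) • zvec

/-- The polynomial ring `S = ℝ[x_1, …, x_m]`. -/
abbrev PolyS (m : ℕ) := MvPolynomial (Fin m) ℝ

/-- The defining linear form of the hyperplane with normal vector `c`. -/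
def linForm {m : ℕ} (c : Fin m → ℝ) : PolyS m :=
  ∑ i, MvPolynomial.C (c i) * MvPolynomial.X i

/-- The module `D(A, mult)` of logarithmic derivations of the (multi)arrangement whose
hyperplanes have normal vectors `A` with multiplicities `mult`:
`D(A,mult) = {θ : θ(α_H) ∈ S·α_H^{mult H} for all H ∈ A}`.
With `mult = 1` this is the usual module `D(A)`. -/
def DerArr {m : ℕ} (A : Finset (Fin m → ℝ)) (mult : (Fin m → ℝ) → ℕ) :
    Submodule (PolyS m) (Derivation ℝ (PolyS m) (PolyS m)) where
  carrier := {θ | ∀ c ∈ A, θ (linForm c) ∈ Ideal.span {linForm c ^ mult c}}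
  add_mem' := by
    intro a b ha hb c hc
    rw [Derivation.add_apply]
    exact add_mem (ha c hc) (hb c hc)
  zero_mem' := by
    intro c hc
    simp
  smul_mem' := by
    intro p θ hθ c hc
    rw [Derivation.smul_apply, smul_eq_mul]
    exact Ideal.mul_mem_left _ _ (hθ c hc)

/-- A derivation `θ = ∑ fᵢ ∂ᵢ` is homogeneous of (polynomial) degree `d` if each
coefficient `fᵢ = θ(xᵢ)` is homogeneous of degree `d`. -/
def IsHomogDer {m : ℕ} (θ : Derivation ℝ (PolyS m) (PolyS m)) (d : ℕ) : Prop :=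
  ∀ i : Fin m, (θ (MvPolynomial.X i)).IsHomogeneous d

/-- The (multi)arrangement with normals `A` and multiplicity `mult` is free with
exponents `d : Fin m → ℕ` : `D(A,mult)` admits a basis of homogeneous derivations
of degrees `d 0, …, d (m-1)`. -/
def FreeWithExp {m : ℕ} (A : Finset (Fin m → ℝ)) (mult : (Fin m → ℝ) → ℕ)
    (d : Fin m → ℕ) : Prop :=
  ∃ b : Module.Basis (Fin m) (PolyS m) (DerArr A mult),
    ∀ i, IsHomogDer (b i : Derivation ℝ (PolyS m) (PolyS m)) (d i)

/-- The arrangement with normals `A` (simple multiplicities) is free. -/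
def IsFreeArr {m : ℕ} (A : Finset (Fin m → ℝ)) : Prop :=
  ∃ d : Fin m → ℕ, FreeWithExp A (fun _ => 1) d

/-- Freeness with the exponents prescribed as a multiset of integers. -/
def FreeWithExpMultiset {m : ℕ} (A : Finset (Fin m → ℝ)) (mult : (Fin m → ℝ) → ℕ)
    (M : Multiset ℤ) : Prop :=
  ∃ d : Fin m → ℕ, FreeWithExp A mult d ∧
    Multiset.map (fun i => (d i : ℤ)) Finset.univ.val = M

/-- `d` is the dual partition of the pair `(T, f)` :
for every `i ≥ 1`, `#{j : d j ≥ i} = #(f⁻¹(i) ∩ T)`. -/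
def IsDualPartitionOf {m : ℕ} {V : Type*} (d : Fin m → ℕ) (T : Finset V) (f : V → ℤ) :
    Prop :=
  ∀ i : ℕ, 1 ≤ i →
    (Finset.univ.filter fun j => i ≤ d j).card = (T.filter fun v => f v = (i : ℤ)).card

/-!
Write roots in the basis of simple roots `a`, `b` with `a` long, so that `⟨b, a^∨⟩ = -1` and
`⟨a, b^∨⟩ = -r` with `r ∈ {1, 2, 3}` (orthogonal simple roots would make `Φ` reducible). The
coordinate vectors of the roots are stable under both simple reflections, never have coefficients
of opposite signs, contain no proper multiples of one another, and a positive root of height at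
least two stays a root after subtracting a simple root with which it has positive inner product.
These facts force the positive coordinates to be those of `A₂`, `B₂` or `G₂`, and inspecting the
three lists shows that `α - β` is a nonzero multiple of a positive root `γ` unless `{α, β} = Δ`.
Subtracting the equations of `H_α^{±k}` and `H_β^{±k}` then leaves a multiple of that of `H_γ^0`.
-/

section Dot

variable {ℓ : ℕ}

theorem dot_eq_dotProduct (x y : Fin ℓ → ℝ) : dot x y = x ⬝ᵥ y := rfl

theorem dot_comm (x y : Fin ℓ → ℝ) : dot x y = dot y x := dotProduct_comm x y

theorem dot_self_pos {x : Fin ℓ → ℝ} (hx : x ≠ 0) : 0 < dot x x :=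
  lt_of_le_of_ne (Finset.sum_nonneg fun i _ => mul_self_nonneg (x i))
    (Ne.symm (mt dotProduct_self_eq_zero.mp hx))

theorem dot_mul_dot_lt_of_linearIndependent {x y : Fin ℓ → ℝ}
    (h : LinearIndependent ℝ ![x, y]) : dot x y * dot x y < dot x x * dot y y := by
  have hy : y ≠ 0 := by simpa using h.ne_zero 1
  have hv : dot y y • x - dot x y • y ≠ 0 := fun hv =>
    (dot_self_pos hy).ne' (LinearIndependent.pair_iff.mp h _ (-dot x y) (by rw [← hv]; module)).1
  have key : dot (dot y y • x - dot x y • y) (dot y y • x - dot x y • y) =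
      dot y y * (dot x x * dot y y - dot x y * dot x y) := by
    simp only [dot_eq_dotProduct, sub_dotProduct, dotProduct_sub, smul_dotProduct,
      dotProduct_smul, smul_eq_mul, dotProduct_comm y x]
    ring
  have := pos_of_mul_pos_right (key ▸ dot_self_pos hv) (dot_self_pos hy).le
  linarith

end Dot

section Hyperplanes

variable {ℓ : ℕ}

theorem Hset_inter_subset_Hset_sub (u v : Fin ℓ → ℝ) : Hset u ∩ Hset v ⊆ Hset (u - v) := by
  rintro x ⟨hu, hv⟩
  simp_all [Hset, dot_eq_dotProduct, sub_dotProduct]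

theorem Hset_smul {c : ℝ} (hc : c ≠ 0) (u : Fin ℓ → ℝ) : Hset (c • u) = Hset u := by
  ext x
  simp [Hset, dot_eq_dotProduct, smul_dotProduct, hc]

theorem emb_sub (x y : Fin ℓ → ℝ) : emb (x - y) = emb x - emb y := by
  funext i
  induction i using Fin.lastCases <;> simp [emb]

theorem emb_smul (c : ℝ) (x : Fin ℓ → ℝ) : emb (c • x) = c • emb x := by
  funext i
  induction i using Fin.lastCases <;> simp [emb]

theorem Hset_emb_add_inter_subset {α β γ : Fin ℓ → ℝ} {c : ℝ} (hc : c ≠ 0)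
    (h : α - β = c • γ) (w : Fin (ℓ + 1) → ℝ) :
    Hset (emb α + w) ∩ Hset (emb β + w) ⊆ Hset (emb γ) :=
  calc _ ⊆ Hset (emb α + w - (emb β + w)) := Hset_inter_subset_Hset_sub _ _
    _ = Hset (c • emb γ) := by rw [add_sub_add_right_eq_sub, ← emb_sub, h, emb_smul]
    _ = Hset (emb γ) := Hset_smul hc _

end Hyperplanes

namespace IsIrredCrystRootSystem

variable {ℓ : ℕ} {Φ : Finset (Fin ℓ → ℝ)} {α β : Fin ℓ → ℝ}

theorem reflect_mem_of_two_mul_dot_eq (hΦ : IsIrredCrystRootSystem Φ) (hα : α ∈ Φ)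
    (hβ : β ∈ Φ) {e : ℝ} (he : 2 * dot β α = e * dot α α) : β - e • α ∈ Φ := by
  have : 2 * dot β α / dot α α = e := by
    rw [he, mul_div_cancel_right₀ _ (dot_self_pos (hΦ.nonzero α hα)).ne']
  simpa [this] using hΦ.reflect_mem α hα β hβ

theorem neg_mem (hΦ : IsIrredCrystRootSystem Φ) (hα : α ∈ Φ) : -α ∈ Φ := by
  convert hΦ.reflect_mem_of_two_mul_dot_eq hα hα (e := 2) (by ring) using 1
  module

theorem exists_two_mul_dot_eq (hΦ : IsIrredCrystRootSystem Φ) (hα : α ∈ Φ) (hβ : β ∈ Φ) :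
    ∃ n : ℤ, 2 * dot β α = n * dot α α := by
  obtain ⟨n, hn⟩ := hΦ.crystallographic α hα β hβ
  exact ⟨n, by rw [← hn, div_mul_cancel₀ _ (dot_self_pos (hΦ.nonzero α hα)).ne']⟩

theorem sub_mem_of_dot_pos (hΦ : IsIrredCrystRootSystem Φ) (hα : α ∈ Φ) (hβ : β ∈ Φ)
    (hpos : 0 < dot α β) (hne : α ≠ β) : β - α ∈ Φ := by
  have hα0 := hΦ.nonzero α hα
  have hA := dot_self_pos hα0
  by_cases hli : LinearIndependent ℝ ![α, β]
  · have hB := dot_self_pos (hΦ.nonzero β hβ)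
    obtain ⟨m, hm⟩ := hΦ.exists_two_mul_dot_eq hα hβ
    obtain ⟨n, hn⟩ := hΦ.exists_two_mul_dot_eq hβ hα
    rw [dot_comm] at hm
    have hm0 : 0 < m := by
      have : (0 : ℝ) < m := pos_of_mul_pos_left (by linarith) hA.le
      exact_mod_cast this
    have hn0 : 0 < n := by
      have : (0 : ℝ) < n := pos_of_mul_pos_left (by linarith) hB.le
      exact_mod_cast this
    have hmn : m * n < 4 := by
      have hcs := dot_mul_dot_lt_of_linearIndependent hli
      have : ((m * n : ℤ) : ℝ) * (dot α α * dot β β) < 4 * (dot α α * dot β β) := by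
        push_cast
        nlinarith
      exact_mod_cast lt_of_mul_lt_mul_right this (by positivity)
    obtain rfl | rfl : m = 1 ∨ n = 1 := by
      by_contra! h
      nlinarith [show 2 ≤ m by omega, show 2 ≤ n by omega]
    · simpa using hΦ.reflect_mem_of_two_mul_dot_eq hα hβ (e := 1) (by rw [dot_comm]; simpa using hm)
    · simpa using hΦ.neg_mem (hΦ.reflect_mem_of_two_mul_dot_eq hβ hα (e := 1) (by simpa using hn))
  · obtain ⟨t, rfl⟩ : ∃ t : ℝ, t • α = β := by
      simpa [LinearIndependent.pair_iff' hα0] using hli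
    rcases hΦ.reduced α hα t hβ with rfl | rfl
    · simp at hne
    · have : dot α ((-1 : ℝ) • α) = -dot α α := by simp [dot_eq_dotProduct]
      linarith

end IsIrredCrystRootSystem

section Coefficients

def IsMixed (p : ℤ × ℤ) : Prop := (p.1 < 0 ∧ 0 < p.2) ∨ (0 < p.1 ∧ p.2 < 0)

instance : DecidablePred IsMixed := fun p =>
  inferInstanceAs (Decidable ((p.1 < 0 ∧ 0 < p.2) ∨ (0 < p.1 ∧ p.2 < 0)))

theorem isMixed_swap {p : ℤ × ℤ} : IsMixed p.swap ↔ IsMixed p := by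
  simp only [IsMixed, Prod.fst_swap, Prod.snd_swap]
  tauto

/-- The reflections `s_a` and `s_b` in coordinates `(m, n) ↦ m a + n b`, where
`q = ⟨b, a^∨⟩` resp. `q = ⟨a, b^∨⟩`. -/
def reflFst (q : ℤ) (p : ℤ × ℤ) : ℤ × ℤ := (-p.1 - q * p.2, p.2)

def reflSnd (q : ℤ) (p : ℤ × ℤ) : ℤ × ℤ := (p.1, -p.2 - q * p.1)

/-- The coordinates `(m, n)` of the roots `m a + n b` of a rank two root system with simple
roots `a`, `b` and Cartan integers `⟨b, a^∨⟩ = -1`, `⟨a, b^∨⟩ = -r`. -/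
structure IsRankTwoRootCoeffs (T : Set (ℤ × ℤ)) (r : ℕ) : Prop where
  one_zero_mem : ((1, 0) : ℤ × ℤ) ∈ T
  zero_one_mem : ((0, 1) : ℤ × ℤ) ∈ T
  reflFst_mem : ∀ p ∈ T, reflFst (-1) p ∈ T
  reflSnd_mem : ∀ p ∈ T, reflSnd (-r) p ∈ T
  not_isMixed : ∀ p ∈ T, ¬IsMixed p
  eq_one_or_eq_neg_one_of_zsmul_mem : ∀ p ∈ T, ∀ k : ℤ, k • p ∈ T → k = 1 ∨ k = -1
  sub_mem_of_two_le : ∀ p ∈ T, 0 ≤ p.1 → 0 ≤ p.2 → 2 ≤ p.1 + p.2 →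
    p - (1, 0) ∈ T ∨ p - (0, 1) ∈ T

/-- The positive roots of `A₂`, `B₂` and `G₂` in these coordinates. -/
def posCoeffs : ℕ → Finset (ℤ × ℤ)
  | 1 => {(1, 0), (0, 1), (1, 1)}
  | 2 => {(1, 0), (0, 1), (1, 1), (1, 2)}
  | _ => {(1, 0), (0, 1), (1, 1), (1, 2), (1, 3), (2, 3)}

theorem posCoeffs_nonneg : ∀ r ∈ ({1, 2, 3} : Finset ℕ), ∀ l ∈ posCoeffs r,
    0 ≤ l.1 ∧ 0 ≤ l.2 := by
  decide

theorem posCoeffs_generated : ∀ r ∈ ({1, 2, 3} : Finset ℕ), ∀ l ∈ posCoeffs r,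
    l = (1, 0) ∨ l = (0, 1) ∨ ∃ l' ∈ posCoeffs r, l'.1 + l'.2 < l.1 + l.2 ∧
      (l = reflFst (-1) l' ∨ l = reflSnd (-r) l') := by
  decide

theorem posCoeffs_add_mem_or : ∀ r ∈ ({1, 2, 3} : Finset ℕ), ∀ l ∈ posCoeffs r,
    ∀ e ∈ ({(1, 0), (0, 1)} : Finset (ℤ × ℤ)), l + e ∈ posCoeffs r ∨
      IsMixed (reflFst (-1) (l + e)) ∨ IsMixed (reflSnd (-r) (l + e)) ∨
      ∃ l' ∈ posCoeffs r, ∃ k ∈ ({2, 3} : Finset ℤ), l + e = k • l' := by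
  decide

theorem posCoeffs_sub_eq_zsmul : ∀ r ∈ ({1, 2, 3} : Finset ℕ), ∀ x ∈ posCoeffs r,
    ∀ y ∈ posCoeffs r, x ≠ y → ¬(x = (1, 0) ∧ y = (0, 1)) → ¬(x = (0, 1) ∧ y = (1, 0)) →
      ∃ l ∈ posCoeffs r, ∃ k ∈ Finset.Icc (-3 : ℤ) 3, k ≠ 0 ∧ x - y = k • l := by
  decide

namespace IsRankTwoRootCoeffs

variable {T : Set (ℤ × ℤ)} {r : ℕ}

theorem zero_notMem (hT : IsRankTwoRootCoeffs T r) : (0 : ℤ × ℤ) ∉ T := fun h => by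
  simpa using hT.eq_one_or_eq_neg_one_of_zsmul_mem 0 h 2 (by simpa using h)

theorem posCoeffs_subset (hT : IsRankTwoRootCoeffs T r) (hr : r ∈ ({1, 2, 3} : Finset ℕ)) :
    ↑(posCoeffs r) ⊆ T := by
  suffices ∀ n : ℕ, ∀ l ∈ posCoeffs r, (l.1 + l.2).toNat = n → l ∈ T from
    fun l hl => this _ l hl rfl
  intro n
  induction n using Nat.strong_induction_on with
  | _ n ih =>
    intro l hl hn
    rcases posCoeffs_generated r hr l hl with rfl | rfl | ⟨l', hl', hlt, rfl | rfl⟩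
    · exact hT.one_zero_mem
    · exact hT.zero_one_mem
    all_goals have := posCoeffs_nonneg r hr l' hl'
    · exact hT.reflFst_mem l' (ih _ (by omega) l' hl' rfl)
    · exact hT.reflSnd_mem l' (ih _ (by omega) l' hl' rfl)

theorem mem_posCoeffs_of_sub_mem (hT : IsRankTwoRootCoeffs T r)
    (hr : r ∈ ({1, 2, 3} : Finset ℕ)) {p e : ℤ × ℤ} (he : e ∈ ({(1, 0), (0, 1)} : Finset (ℤ × ℤ)))
    (hp : p ∈ T) (hpe : p - e ∈ posCoeffs r) : p ∈ posCoeffs r := by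
  rcases sub_add_cancel p e ▸ posCoeffs_add_mem_or r hr _ hpe e he with
    h | h | h | ⟨l, hl, k, hk, hkl⟩
  · exact h
  · exact absurd h (hT.not_isMixed _ (hT.reflFst_mem _ hp))
  · exact absurd h (hT.not_isMixed _ (hT.reflSnd_mem _ hp))
  · have := hT.eq_one_or_eq_neg_one_of_zsmul_mem l (hT.posCoeffs_subset hr hl) k (hkl ▸ hp)
    simp only [Finset.mem_insert, Finset.mem_singleton] at hk
    omega

theorem mem_posCoeffs (hT : IsRankTwoRootCoeffs T r) (hr : r ∈ ({1, 2, 3} : Finset ℕ))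
    {p : ℤ × ℤ} (hp : p ∈ T) (h1 : 0 ≤ p.1) (h2 : 0 ≤ p.2) : p ∈ posCoeffs r := by
  induction hN : (p.1 + p.2).toNat using Nat.strong_induction_on generalizing p with
  | _ N ih =>
  obtain ⟨m, n⟩ := p
  dsimp only at h1 h2 hN
  have hp0 : (m, n) ≠ 0 := fun h => hT.zero_notMem (h ▸ hp)
  by_cases hsmall : m + n < 2
  · obtain ⟨rfl, rfl⟩ | ⟨rfl, rfl⟩ : (m = 1 ∧ n = 0) ∨ (m = 0 ∧ n = 1) := by
      simp only [ne_eq, Prod.mk_eq_zero, not_and] at hp0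
      omega
    all_goals simp only [Finset.mem_insert, Finset.mem_singleton] at hr
    all_goals rcases hr with rfl | rfl | rfl <;> decide
  have hpred : ∀ e ∈ ({(1, 0), (0, 1)} : Finset (ℤ × ℤ)), (m, n) - e ∈ T →
      (m, n) ∈ posCoeffs r := by
    intro e he hpe
    refine hT.mem_posCoeffs_of_sub_mem hr he hp ?_
    have hnm := hT.not_isMixed _ hpe
    simp only [Finset.mem_insert, Finset.mem_singleton] at he
    rcases he with rfl | rfl <;> simp only [IsMixed, Prod.mk_sub_mk] at hnm hpe ⊢ <;>
      exact ih _ (by omega) hpe (by omega) (by omega) rfl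
  rcases hT.sub_mem_of_two_le _ hp h1 h2 (by omega) with h | h
  exacts [hpred _ (by simp) h, hpred _ (by simp) h]

theorem exists_sub_eq_zsmul (hT : IsRankTwoRootCoeffs T r) (hr : r ∈ ({1, 2, 3} : Finset ℕ))
    {x y : ℤ × ℤ} (hx : x ∈ T) (hx1 : 0 ≤ x.1) (hx2 : 0 ≤ x.2)
    (hy : y ∈ T) (hy1 : 0 ≤ y.1) (hy2 : 0 ≤ y.2) (hxy : x ≠ y)
    (hs : ¬(x = (1, 0) ∧ y = (0, 1))) (hs' : ¬(x = (0, 1) ∧ y = (1, 0))) :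
    ∃ l ∈ T, (0 ≤ l.1 ∧ 0 ≤ l.2) ∧ ∃ k : ℤ, k ≠ 0 ∧ x - y = k • l := by
  obtain ⟨l, hl, k, -, hk, hxy⟩ := posCoeffs_sub_eq_zsmul r hr x (hT.mem_posCoeffs hr hx hx1 hx2)
    y (hT.mem_posCoeffs hr hy hy1 hy2) hxy hs hs'
  exact ⟨l, hT.posCoeffs_subset hr hl, posCoeffs_nonneg r hr l hl, k, hk, hxy⟩

end IsRankTwoRootCoeffs

end Coefficients

section Lincomb

variable {M : Type*} [AddCommGroup M] [Module ℝ M] (a b : M)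

def lincomb (p : ℤ × ℤ) : M := (p.1 : ℝ) • a + (p.2 : ℝ) • b

@[simp]
theorem lincomb_one_zero : lincomb a b (1, 0) = a := by simp [lincomb]

@[simp]
theorem lincomb_zero_one : lincomb a b (0, 1) = b := by simp [lincomb]

theorem lincomb_sub (p p' : ℤ × ℤ) : lincomb a b (p - p') = lincomb a b p - lincomb a b p' := by
  simp only [lincomb, Prod.fst_sub, Prod.snd_sub, Int.cast_sub]
  module

theorem lincomb_zsmul (k : ℤ) (p : ℤ × ℤ) : lincomb a b (k • p) = (k : ℝ) • lincomb a b p := by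
  simp only [lincomb, Prod.smul_fst, Prod.smul_snd, smul_eq_mul, Int.cast_mul]
  module

theorem lincomb_swap (p : ℤ × ℤ) : lincomb b a p.swap = lincomb a b p := add_comm _ _

variable {a b} in
theorem lincomb_injective (h : LinearIndependent ℝ ![a, b]) : Function.Injective (lincomb a b) := by
  intro p p' hpp'
  have h0 : ((p.1 : ℝ) - p'.1) • a + ((p.2 : ℝ) - p'.2) • b = 0 := by
    rw [← sub_eq_zero.mpr hpp', lincomb, lincomb]
    module
  obtain ⟨h1, h2⟩ := LinearIndependent.pair_iff.mp h _ _ h0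
  exact Prod.ext (by exact_mod_cast sub_eq_zero.mp h1) (by exact_mod_cast sub_eq_zero.mp h2)

end Lincomb

theorem dot_lincomb_left {ℓ : ℕ} (a b x : Fin ℓ → ℝ) (p : ℤ × ℤ) :
    dot (lincomb a b p) x = p.1 * dot a x + p.2 * dot b x := by
  simp only [lincomb, dot_eq_dotProduct, add_dotProduct, smul_dotProduct, smul_eq_mul]

structure IsSimplePair {ℓ : ℕ} (Φ : Finset (Fin ℓ → ℝ)) (a b : Fin ℓ → ℝ) : Prop where
  left_mem : a ∈ Φ
  right_mem : b ∈ Φ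
  linearIndependent : LinearIndependent ℝ ![a, b]
  exists_eq_lincomb : ∀ γ ∈ Φ, ∃ p, ¬IsMixed p ∧ γ = lincomb a b p

namespace IsSimplePair

variable {ℓ : ℕ} {Φ : Finset (Fin ℓ → ℝ)} {a b : Fin ℓ → ℝ}

theorem not_isMixed (h : IsSimplePair Φ a b) {p : ℤ × ℤ} (hp : lincomb a b p ∈ Φ) :
    ¬IsMixed p := by
  obtain ⟨p', hp', he⟩ := h.exists_eq_lincomb _ hp
  rwa [lincomb_injective h.linearIndependent he]

theorem swap (h : IsSimplePair Φ a b) : IsSimplePair Φ b a where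
  left_mem := h.right_mem
  right_mem := h.left_mem
  linearIndependent := LinearIndependent.pair_symm_iff.mp h.linearIndependent
  exists_eq_lincomb γ hγ := by
    obtain ⟨p, hp, rfl⟩ := h.exists_eq_lincomb γ hγ
    exact ⟨p.swap, isMixed_swap.not.mpr hp, (lincomb_swap a b p).symm⟩

theorem reflFst_mem (hΦ : IsIrredCrystRootSystem Φ) (h : IsSimplePair Φ a b) {q : ℤ}
    (hq : 2 * dot b a = q * dot a a) {p : ℤ × ℤ} (hp : lincomb a b p ∈ Φ) :
    lincomb a b (reflFst q p) ∈ Φ := by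
  convert hΦ.reflect_mem_of_two_mul_dot_eq h.left_mem hp (e := 2 * p.1 + q * p.2)
    (by rw [dot_lincomb_left]; linear_combination (p.2 : ℝ) * hq) using 1
  simp only [lincomb, reflFst]
  push_cast
  module

theorem reflSnd_mem (hΦ : IsIrredCrystRootSystem Φ) (h : IsSimplePair Φ a b) {q : ℤ}
    (hq : 2 * dot a b = q * dot b b) {p : ℤ × ℤ} (hp : lincomb a b p ∈ Φ) :
    lincomb a b (reflSnd q p) ∈ Φ := by
  have := h.swap.reflFst_mem hΦ hq (p := p.swap) (by rwa [lincomb_swap])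
  rwa [show reflFst q p.swap = (reflSnd q p).swap from rfl, lincomb_swap] at this

theorem ne (h : IsSimplePair Φ a b) : a ≠ b := fun hab =>
  by simpa using (LinearIndependent.pair_iff.mp h.linearIndependent 1 (-1) (by rw [hab]; module)).1

theorem dot_nonpos (hΦ : IsIrredCrystRootSystem Φ) (h : IsSimplePair Φ a b) : dot a b ≤ 0 := by
  by_contra! hpos
  refine h.not_isMixed (p := (-1, 1)) ?_ (by decide)
  convert hΦ.sub_mem_of_dot_pos h.left_mem h.right_mem hpos h.ne using 1
  simp only [lincomb, Int.cast_neg, Int.cast_one]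
  module

theorem fst_eq_zero_or_snd_eq_zero (hΦ : IsIrredCrystRootSystem Φ) (h : IsSimplePair Φ a b)
    (hab : dot a b = 0) {p : ℤ × ℤ} (hp : lincomb a b p ∈ Φ) : p.1 = 0 ∨ p.2 = 0 := by
  have hs := h.not_isMixed (h.reflFst_mem hΦ (q := 0) (by simp [dot_comm, hab]) hp)
  have := h.not_isMixed hp
  simp only [IsMixed, reflFst] at hs this
  omega

theorem dot_ne_zero (hΦ : IsIrredCrystRootSystem Φ) (h : IsSimplePair Φ a b) :
    dot a b ≠ 0 := by
  intro hab
  have hfst : ∀ p, lincomb a b p ∈ Φ → lincomb a b p ∉ ({a, -a} : Finset _) → p.1 = 0 := by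
    intro p hp hpΨ
    refine (h.fst_eq_zero_or_snd_eq_zero hΦ hab hp).resolve_right fun hp2 => hpΨ ?_
    have : (p.1 : ℝ) • a ∈ Φ := by simpa [lincomb, hp2] using hp
    rcases hΦ.reduced a h.left_mem _ this with h1 | h1 <;> simp [lincomb, hp2, h1]
  have hsub : ({a, -a} : Finset _) ⊆ Φ := by
    simp [Finset.insert_subset_iff, h.left_mem, hΦ.neg_mem h.left_mem]
  have horth : ∀ x ∈ ({a, -a} : Finset _), ∀ y ∈ Φ \ {a, -a}, dot x y = 0 := by
    intro x hx y hy
    obtain ⟨hyΦ, hyΨ⟩ := Finset.mem_sdiff.mp hy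
    obtain ⟨p, -, rfl⟩ := h.exists_eq_lincomb y hyΦ
    have hp1 := hfst p hyΦ hyΨ
    simp only [Finset.mem_insert, Finset.mem_singleton] at hx
    have hba : b ⬝ᵥ a = 0 := by rw [← dot_eq_dotProduct, dot_comm, hab]
    rcases hx with rfl | rfl <;> rw [dot_comm, dot_lincomb_left, hp1] <;>
      simp [dot_eq_dotProduct, hba]
  rcases hΦ.irreducible {a, -a} hsub horth with h0 | h0
  · simp at h0
  · have hb : lincomb a b (0, 1) ∈ ({lincomb a b (1, 0), lincomb a b (-1, 0)} : Finset _) := by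
      simpa [h0, lincomb] using h.right_mem
    simp only [Finset.mem_insert, Finset.mem_singleton,
      (lincomb_injective h.linearIndependent).eq_iff] at hb
    simp at hb

theorem cartanIntegers_of_dot_le (hΦ : IsIrredCrystRootSystem Φ) (h : IsSimplePair Φ a b)
    (hle : dot b b ≤ dot a a) :
    2 * dot b a = (-1 : ℤ) * dot a a ∧
      ∃ r ∈ ({1, 2, 3} : Finset ℕ), 2 * dot a b = (-r : ℤ) * dot b b := by
  have hA := dot_self_pos (hΦ.nonzero a h.left_mem)
  have hB := dot_self_pos (hΦ.nonzero b h.right_mem)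
  have hD : dot a b < 0 := lt_of_le_of_ne (h.dot_nonpos hΦ) (h.dot_ne_zero hΦ)
  have hcs := dot_mul_dot_lt_of_linearIndependent h.linearIndependent
  obtain ⟨q, hq⟩ := hΦ.exists_two_mul_dot_eq h.left_mem h.right_mem
  obtain ⟨p, hp⟩ := hΦ.exists_two_mul_dot_eq h.right_mem h.left_mem
  rw [dot_comm] at hq
  have hq0 : q < 0 := by
    have : (q : ℝ) < 0 := by nlinarith
    exact_mod_cast this
  have hp0 : p < 0 := by
    have : (p : ℝ) < 0 := by nlinarith
    exact_mod_cast this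
  have hqq : (q : ℝ) * q * (dot a a * dot a a) = 4 * (dot a b * dot a b) := by
    linear_combination (-((q : ℝ) * dot a a + 2 * dot a b)) * hq
  have hqp : (q : ℝ) * p * (dot a a * dot b b) = 4 * (dot a b * dot a b) := by
    linear_combination (-(p : ℝ) * dot b b) * hq + (-2 * dot a b) * hp
  have hq1 : q = -1 := by
    have : (q : ℝ) * q < 4 :=
      lt_of_mul_lt_mul_right (by nlinarith) (by positivity : 0 ≤ dot a a * dot a a)
    have : q * q < 4 := by exact_mod_cast this
    nlinarith
  have hp4 : -4 < p := by
    have : (q : ℝ) * p < 4 :=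
      lt_of_mul_lt_mul_right (by nlinarith) (by positivity : 0 ≤ dot a a * dot b b)
    have : q * p < 4 := by exact_mod_cast this
    rw [hq1] at this
    omega
  refine ⟨by rw [dot_comm, hq, hq1], (-p).toNat, by simp; omega, ?_⟩
  rw [hp, Int.toNat_of_nonneg (by omega), neg_neg]

theorem sub_mem_of_two_le (hΦ : IsIrredCrystRootSystem Φ) (h : IsSimplePair Φ a b)
    {p : ℤ × ℤ} (hp : lincomb a b p ∈ Φ) (h1 : 0 ≤ p.1) (h2 : 0 ≤ p.2) (h12 : 2 ≤ p.1 + p.2) :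
    lincomb a b (p - (1, 0)) ∈ Φ ∨ lincomb a b (p - (0, 1)) ∈ Φ := by
  have hne : ∀ e, e.1 + e.2 = 1 → lincomb a b e ≠ lincomb a b p := fun e he hep => by
    rw [(lincomb_injective h.linearIndependent) hep] at he
    omega
  have hγ := dot_self_pos (hΦ.nonzero _ hp)
  rw [dot_lincomb_left] at hγ
  rw [lincomb_sub, lincomb_sub, lincomb_one_zero, lincomb_zero_one]
  by_cases ha : 0 < dot a (lincomb a b p)
  · exact Or.inl (hΦ.sub_mem_of_dot_pos h.left_mem hp ha (by simpa using hne (1, 0) rfl))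
  · have hb : 0 < dot b (lincomb a b p) := by
      by_contra hb
      have h1' : (0 : ℝ) ≤ p.1 := by exact_mod_cast h1
      have h2' : (0 : ℝ) ≤ p.2 := by exact_mod_cast h2
      nlinarith [mul_nonpos_of_nonneg_of_nonpos h1' (not_lt.mp ha),
        mul_nonpos_of_nonneg_of_nonpos h2' (not_lt.mp hb)]
    exact Or.inr (hΦ.sub_mem_of_dot_pos h.right_mem hp hb (by simpa using hne (0, 1) rfl))

theorem isRankTwoRootCoeffs (hΦ : IsIrredCrystRootSystem Φ) (h : IsSimplePair Φ a b)
    (hle : dot b b ≤ dot a a) :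
    ∃ r ∈ ({1, 2, 3} : Finset ℕ), IsRankTwoRootCoeffs (lincomb a b ⁻¹' Φ) r := by
  obtain ⟨hq, r, hr, hp⟩ := h.cartanIntegers_of_dot_le hΦ hle
  refine ⟨r, hr, ⟨by simpa using h.left_mem, by simpa using h.right_mem,
    fun p hp' => h.reflFst_mem hΦ hq hp', fun p hp' => h.reflSnd_mem hΦ hp hp',
    fun p hp' => h.not_isMixed hp', fun p hp' k hk => ?_, fun p hp' => h.sub_mem_of_two_le hΦ hp'⟩⟩
  have := hΦ.reduced _ hp' k (by rw [← lincomb_zsmul]; exact hk)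
  exact_mod_cast this

theorem exists_sub_eq_zsmul (hΦ : IsIrredCrystRootSystem Φ) (h : IsSimplePair Φ a b)
    {x y : ℤ × ℤ} (hx : lincomb a b x ∈ Φ) (hx1 : 0 ≤ x.1) (hx2 : 0 ≤ x.2)
    (hy : lincomb a b y ∈ Φ) (hy1 : 0 ≤ y.1) (hy2 : 0 ≤ y.2) (hxy : x ≠ y)
    (hs : ¬(x = (1, 0) ∧ y = (0, 1))) (hs' : ¬(x = (0, 1) ∧ y = (1, 0))) :
    ∃ l, lincomb a b l ∈ Φ ∧ (0 ≤ l.1 ∧ 0 ≤ l.2) ∧ ∃ k : ℤ, k ≠ 0 ∧ x - y = k • l := by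
  wlog hle : dot b b ≤ dot a a generalizing a b x y
  · obtain ⟨l, hl, hl0, k, hk, hxyl⟩ := this h.swap (x := x.swap) (y := y.swap)
      (by rwa [lincomb_swap]) hx2 hx1 (by rwa [lincomb_swap]) hy2 hy1
      (by simpa using hxy) (by simpa [Prod.swap_eq_iff_eq_swap] using hs')
      (by simpa [Prod.swap_eq_iff_eq_swap] using hs) (le_of_not_ge hle)
    refine ⟨l.swap, by rwa [lincomb_swap], hl0.symm, k, hk, ?_⟩
    simp only [Prod.ext_iff, Prod.fst_sub, Prod.snd_sub, Prod.smul_fst, Prod.smul_snd,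
      Prod.fst_swap, Prod.snd_swap] at hxyl ⊢
    exact hxyl.symm
  obtain ⟨r, hr, hT⟩ := h.isRankTwoRootCoeffs hΦ hle
  exact hT.exists_sub_eq_zsmul hr hx hx1 hx2 hy hy1 hy2 hxy hs hs'

end IsSimplePair

section PosRoots

variable {Φ : Finset (Fin 2 → ℝ)} {Δ : Fin 2 → Fin 2 → ℝ}

theorem IsSimpleSystem.isSimplePair (hΔ : IsSimpleSystem Φ Δ) : IsSimplePair Φ (Δ 0) (Δ 1) where
  left_mem := hΔ.mem 0
  right_mem := hΔ.mem 1
  linearIndependent := by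
    convert hΔ.indep
    ext i
    fin_cases i <;> rfl
  exists_eq_lincomb γ hγ := by
    rcases hΔ.decomp γ hγ with ⟨c, hc⟩ | ⟨c, hc⟩
    · exact ⟨(c 0, c 1), by simp [IsMixed], by simp [hc, lincomb, Fin.sum_univ_two]⟩
    · refine ⟨(-c 0, -c 1), by simp [IsMixed], ?_⟩
      rw [← neg_neg γ, hc]
      simp only [lincomb, Fin.sum_univ_two, Int.cast_neg, Int.cast_natCast, neg_smul, neg_add]

theorem mem_posRoots_iff {γ : Fin 2 → ℝ} :
    γ ∈ posRoots Φ Δ ↔ γ ∈ Φ ∧ ∃ p : ℤ × ℤ, 0 ≤ p.1 ∧ 0 ≤ p.2 ∧ lincomb (Δ 0) (Δ 1) p = γ := by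
  simp only [posRoots, Finset.mem_filter, Fin.sum_univ_two]
  refine and_congr_right fun _ => ⟨fun ⟨c, hc⟩ => ⟨(c 0, c 1), by simp [hc, lincomb]⟩, ?_⟩
  rintro ⟨p, h1, h2, rfl⟩
  refine ⟨![p.1.toNat, p.2.toNat], ?_⟩
  have e1 : ((p.1.toNat : ℕ) : ℝ) = p.1 := by exact_mod_cast Int.toNat_of_nonneg h1
  have e2 : ((p.2.toNat : ℕ) : ℝ) = p.2 := by exact_mod_cast Int.toNat_of_nonneg h2
  simp [lincomb, e1, e2]

theorem exists_sub_eq_smul_of_mem_posRoots (hΦ : IsIrredCrystRootSystem Φ)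
    (hΔ : IsSimpleSystem Φ Δ) {α β : Fin 2 → ℝ} (hα : α ∈ posRoots Φ Δ) (hβ : β ∈ posRoots Φ Δ)
    (hne : α ≠ β) (hαβ : ({α, β} : Set (Fin 2 → ℝ)) ≠ Set.range Δ) :
    ∃ γ ∈ posRoots Φ Δ, ∃ c : ℝ, c ≠ 0 ∧ α - β = c • γ := by
  obtain ⟨hαΦ, x, hx1, hx2, rfl⟩ := mem_posRoots_iff.mp hα
  obtain ⟨hβΦ, y, hy1, hy2, rfl⟩ := mem_posRoots_iff.mp hβ
  have hrange : Set.range Δ = {Δ 0, Δ 1} := by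
    ext
    simp [Fin.exists_fin_two, eq_comm]
  obtain ⟨l, hl, ⟨hl1, hl2⟩, k, hk, hxy⟩ := hΔ.isSimplePair.exists_sub_eq_zsmul hΦ
    hαΦ hx1 hx2 hβΦ hy1 hy2 (by rintro rfl; exact hne rfl)
    (by rintro ⟨rfl, rfl⟩; simp [hrange] at hαβ)
    (by rintro ⟨rfl, rfl⟩; simp [hrange, Set.pair_comm] at hαβ)
  exact ⟨_, mem_posRoots_iff.mpr ⟨hl, l, hl1, hl2, rfl⟩, k, by exact_mod_cast hk,
    by rw [← lincomb_sub, hxy, lincomb_zsmul]⟩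

end PosRoots

theorem rank_two_intersection_nonsimple_general (Φ : Finset (Fin 2 → ℝ)) (Δ : Fin 2 → Fin 2 → ℝ)
    (hΦ : IsIrredCrystRootSystem Φ) (hΔ : IsSimpleSystem Φ Δ)
    (k : ℕ)
    (α β : Fin 2 → ℝ) (hα : α ∈ posRoots Φ Δ) (hβ : β ∈ posRoots Φ Δ) (hne : α ≠ β)
    (hΔαβ : ({α, β} : Set (Fin 2 → ℝ)) ≠ Set.range Δ) :
    (∃ γ ∈ posRoots Φ Δ,
      Hset (emb α - (k : ℤ) • zvec) ∩ Hset (emb β - (k : ℤ) • zvec) ⊆ Hset (emb γ)) ∧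
    (∃ γ' ∈ posRoots Φ Δ,
      Hset (emb α + (k : ℤ) • zvec) ∩ Hset (emb β + (k : ℤ) • zvec) ⊆ Hset (emb γ')) := by
  obtain ⟨γ, hγ, c, hc, hαβ⟩ := exists_sub_eq_smul_of_mem_posRoots hΦ hΔ hα hβ hne hΔαβ
  refine ⟨⟨γ, hγ, ?_⟩, ⟨γ, hγ, Hset_emb_add_inter_subset hc hαβ _⟩⟩
  simpa only [sub_eq_add_neg] using Hset_emb_add_inter_subset hc hαβ _

/-- **Lemma (Statement 8).** In rank `2`, if `{α, β} ≠ Δ` are distinct positive roots,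
then `H_α^k ∩ H_β^k` is contained in some `H_γ^0` (`γ ∈ Φ⁺`), and similarly for
`H_α^{-k} ∩ H_β^{-k}`. -/
theorem rank_two_intersection_nonsimple (Φ : Finset (Fin 2 → ℝ)) (Δ : Fin 2 → Fin 2 → ℝ)
    (hΦ : IsIrredCrystRootSystem Φ) (hΔ : IsSimpleSystem Φ Δ)
    (k : ℕ) (hk : 0 < k)
    (α β : Fin 2 → ℝ) (hα : α ∈ posRoots Φ Δ) (hβ : β ∈ posRoots Φ Δ) (hne : α ≠ β)
    (hΔαβ : ({α, β} : Set (Fin 2 → ℝ)) ≠ Set.range Δ) :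
    (∃ γ ∈ posRoots Φ Δ,
      Hset (emb α - (k : ℤ) • zvec) ∩ Hset (emb β - (k : ℤ) • zvec) ⊆ Hset (emb γ)) ∧
    (∃ γ' ∈ posRoots Φ Δ,
      Hset (emb α + (k : ℤ) • zvec) ∩ Hset (emb β + (k : ℤ) • zvec) ⊆ Hset (emb γ')) :=
  rank_two_intersection_nonsimple_general Φ Δ hΦ hΔ k α β hα hβ hne hΔαβ

end
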